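/- arXiv:1310.5198 — 2 statements merged into one kernel-verified Lean document; each statement's English description precedes it below -/
import Mathlib

section
/- Let q be an odd prime with q ≡ 1 (mod 3), and let E be an integer not divisible by q. Then the sum over m from 0 to q-1 of the Legendre symbol ((m³+E)/q) equals (E/q)·(1 + φ_{q,3}(Ē)), where Ē is the inverse of E modulo q and φ_{q,3}(Ē) = Σ_{u=1}^{q-1} (u/q)·((u³+Ē)/q). -/
lemma sum_range_zmod {q : ℕ} [NeZero q] (g : ZMod q → ℤ) :
    ∑ m ∈ Finset.range q, g (m : ZMod q) = ∑ x : ZMod q, g x := by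
  refine Finset.sum_nbij' (fun m => (m : ZMod q)) (fun x => x.val) ?_ ?_ ?_ ?_ ?_
  · intro a _; exact Finset.mem_univ _
  · intro a _; exact Finset.mem_range.mpr (ZMod.val_lt a)
  · intro a ha; exact ZMod.val_natCast_of_lt (Finset.mem_range.mp ha)
  · intro a _; simp [ZMod.natCast_val, ZMod.cast_id]
  · intro a _; rfl

theorem stmt_8 (q : ℕ) (hq : q.Prime) [Fact q.Prime] (hodd : q ≠ 2) (h1 : q % 3 = 1)
    (E : ℤ) (hE : ¬ ((q : ℤ) ∣ E)) :
    ∑ m ∈ Finset.range q, legendreSym q ((m : ℤ) ^ 3 + E) =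
      legendreSym q E *
        (1 + ∑ u ∈ Finset.Icc 1 (q - 1),
          legendreSym q (u : ℤ) *
            legendreSym q ((u : ℤ) ^ 3 + (((E : ZMod q)⁻¹.val : ℕ) : ℤ))) := by
  have hq2 : 2 ≤ q := hq.two_le
  set χ := quadraticChar (ZMod q) with hχ
  set e : ZMod q := (E : ZMod q) with he
  have he0 : e ≠ 0 := by
    rw [he, Ne, ZMod.intCast_zmod_eq_zero_iff_dvd]
    exact hE
  have hcastinv : (((e⁻¹.val : ℕ) : ℤ) : ZMod q) = e⁻¹ := by
    push_cast
    simp [ZMod.natCast_val, ZMod.cast_id]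
  -- rewrite LHS
  have hL : ∑ m ∈ Finset.range q, legendreSym q ((m : ℤ) ^ 3 + E)
      = ∑ x : ZMod q, χ (x ^ 3 + e) := by
    rw [← sum_range_zmod (fun x => (χ (x ^ 3 + e) : ℤ))]
    refine Finset.sum_congr rfl fun m _ => ?_
    rw [legendreSym, hχ]
    push_cast
    rfl
  -- rewrite inner RHS sum
  have hIcc : Finset.Icc 1 (q - 1) = (Finset.range q).erase 0 := by
    ext x
    simp only [Finset.mem_Icc, Finset.mem_erase, Finset.mem_range]
    omega
  have hR : ∑ u ∈ Finset.Icc 1 (q - 1),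
        legendreSym q (u : ℤ) * legendreSym q ((u : ℤ) ^ 3 + (((E : ZMod q)⁻¹.val : ℕ) : ℤ))
      = ∑ x : ZMod q, (χ x : ℤ) * χ (x ^ 3 + e⁻¹) := by
    rw [hIcc]
    rw [Finset.sum_erase (Finset.range q)]
    · rw [← sum_range_zmod (fun x => (χ x : ℤ) * χ (x ^ 3 + e⁻¹))]
      refine Finset.sum_congr rfl fun m _ => ?_
      rw [legendreSym, legendreSym, hχ]
      congr 1
      · push_cast; rfl
      · rw [show (((m : ℤ) ^ 3 + (((E : ZMod q)⁻¹.val : ℕ) : ℤ) : ℤ) : ZMod q)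
            = (m : ZMod q) ^ 3 + e⁻¹ by push_cast [ZMod.natCast_val, ZMod.cast_id]; rfl]
    · simp [legendreSym]
  rw [hL, hR]
  -- core identity over ZMod q
  rw [mul_add, mul_one]
  have hleg : legendreSym q E = (χ e : ℤ) := rfl
  rw [hleg, Finset.mul_sum]
  have key : ∀ x : ZMod q, (χ e : ℤ) * ((χ x : ℤ) * χ (x ^ 3 + e⁻¹)) = χ (e * x * (x ^ 3 + e⁻¹)) := by
    intro x
    rw [map_mul, map_mul]
    push_cast
    ring
  simp_rw [key]
  -- split off 0 from LHS
  rw [← Finset.sum_erase_add _ _ (Finset.mem_univ (0 : ZMod q)),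
      ← Finset.sum_erase_add _ _ (Finset.mem_univ (0 : ZMod q))]
  have h0L : (χ ((0 : ZMod q) ^ 3 + e) : ℤ) = χ e := by norm_num
  have h0R : (χ (e * 0 * ((0:ZMod q) ^ 3 + e⁻¹)) : ℤ) = 0 := by
    rw [mul_zero, zero_mul, hχ, quadraticChar_zero]
  rw [h0L, h0R, add_zero, add_comm ((χ e : ℤ))]
  congr 1
  -- now sum over nonzero x
  refine Finset.sum_nbij' (fun x => x⁻¹) (fun x => x⁻¹) ?_ ?_ ?_ ?_ ?_
  · intro a ha
    simp only [Finset.mem_erase, Finset.mem_univ, and_true] at ha ⊢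
    exact inv_ne_zero ha
  · intro a ha
    simp only [Finset.mem_erase, Finset.mem_univ, and_true] at ha ⊢
    exact inv_ne_zero ha
  · intro a _; exact inv_inv a
  · intro a _; exact inv_inv a
  · intro a ha
    simp only [Finset.mem_erase, Finset.mem_univ, and_true] at ha
    have h4 : (χ (a⁻¹) : ℤ) ^ 4 = 1 := by
      have := quadraticChar_sq_one (F := ZMod q) (inv_ne_zero ha)
      have : (χ a⁻¹ : ℤ) ^ 2 = 1 := by exact_mod_cast this
      calc (χ (a⁻¹) : ℤ) ^ 4 = ((χ a⁻¹ : ℤ) ^ 2) ^ 2 := by ring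
        _ = 1 := by rw [this]; norm_num
    have harg : e * a⁻¹ * ((a⁻¹) ^ 3 + e⁻¹) = (a⁻¹)^4 * (a ^ 3 + e) := by
      field_simp
      ring
    rw [harg, map_mul, map_pow]
    push_cast
    rw [h4, one_mul]
end

section
/- Let q be an odd prime, k an odd positive integer with q ≡ 1 (mod k), and E an integer not divisible by q. Then ψ_{q,k}(E) = (E/q)·φ_{q,k}(Ē), where Ē is the inverse of E modulo q. -/
/-!
Substitute `u ↦ u⁻¹` in the right-hand sum: since `k + 1` is even,
`E · u⁻¹ · (u⁻ᵏ + E⁻¹) = (u⁻¹)^(k+1) · (uᵏ + E)` differs from `uᵏ + E` by a nonzero square,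
so the quadratic character takes the same value on both.
-/

open Finset

theorem ZMod.sum_Icc_one_natCast_eq_sum_erase_zero {M : Type*} [AddCommMonoid M] (n : ℕ)
    [NeZero n] (f : ZMod n → M) :
    ∑ u ∈ Icc 1 (n - 1), f u = ∑ x ∈ univ.erase 0, f x := by
  have hn : 0 < n := Nat.pos_of_neZero n
  refine sum_nbij' (fun u => (u : ZMod n)) ZMod.val ?_ ?_ ?_ ?_ (fun _ _ => rfl)
  · intro u hu
    simp only [mem_Icc] at hu
    simp only [mem_erase, mem_univ, and_true, Ne, ZMod.natCast_eq_zero_iff]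
    intro hdvd
    have := Nat.le_of_dvd (by omega) hdvd
    omega
  · intro x hx
    have hx0 : x.val ≠ 0 := by simpa [ZMod.val_eq_zero] using hx
    have := ZMod.val_lt x
    rw [mem_Icc]
    omega
  · intro u hu
    rw [mem_Icc] at hu
    exact ZMod.val_cast_of_lt (by omega)
  · intro x _
    exact ZMod.natCast_zmod_val x

section JacobsthalSum

variable {F : Type*} [Field F] [Fintype F] [DecidableEq F]

theorem quadraticChar_pow_add_eq_mul_inv {k : ℕ} (hk : Odd k) {e x : F} (he : e ≠ 0)
    (hx : x ≠ 0) :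
    quadraticChar F (x ^ k + e) =
      quadraticChar F e * (quadraticChar F x⁻¹ * quadraticChar F (x⁻¹ ^ k + e⁻¹)) := by
  obtain ⟨m, rfl⟩ := hk
  have hsq : e * (x⁻¹ * (x⁻¹ ^ (2 * m + 1) + e⁻¹)) =
      (x⁻¹ ^ (m + 1)) ^ 2 * (x ^ (2 * m + 1) + e) := by
    rw [inv_pow, inv_pow]
    field_simp
    ring
  rw [← map_mul, ← map_mul, hsq, map_mul, quadraticChar_sq_one' (by simpa using hx), one_mul]

theorem sum_quadraticChar_pow_add {k : ℕ} (hk : Odd k) {e : F} (he : e ≠ 0) :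
    ∑ x ∈ univ.erase 0, quadraticChar F (x ^ k + e) =
      quadraticChar F e *
        ∑ x ∈ univ.erase 0, quadraticChar F x * quadraticChar F (x ^ k + e⁻¹) := by
  rw [mul_sum]
  refine sum_equiv (Equiv.inv F) (by simp) fun x hx => ?_
  exact quadraticChar_pow_add_eq_mul_inv hk he (ne_of_mem_erase hx)

end JacobsthalSum

theorem stmt_9_general (q : ℕ) [Fact q.Prime]
    (k : ℕ) (hk : Odd k)
    (E : ℤ) (hE : ¬ ((q : ℤ) ∣ E)) :
    ∑ u ∈ Finset.Icc 1 (q - 1), legendreSym q ((u : ℤ) ^ k + E) =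
      legendreSym q E *
        ∑ u ∈ Finset.Icc 1 (q - 1),
          legendreSym q (u : ℤ) *
            legendreSym q ((u : ℤ) ^ k + (((E : ZMod q)⁻¹.val : ℕ) : ℤ)) := by
  have hE0 : (E : ZMod q) ≠ 0 := by rwa [Ne, ZMod.intCast_zmod_eq_zero_iff_dvd]
  calc ∑ u ∈ Icc 1 (q - 1), legendreSym q ((u : ℤ) ^ k + E)
      = ∑ x ∈ univ.erase 0, quadraticChar (ZMod q) (x ^ k + E) := by
        rw [← ZMod.sum_Icc_one_natCast_eq_sum_erase_zero]
        simp only [legendreSym, Int.cast_add, Int.cast_pow, Int.cast_natCast]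
    _ = _ := sum_quadraticChar_pow_add hk hE0
    _ = _ := by
        rw [← ZMod.sum_Icc_one_natCast_eq_sum_erase_zero]
        simp only [legendreSym, Int.cast_add, Int.cast_pow, Int.cast_natCast,
          ZMod.natCast_zmod_val]

theorem stmt_9 (q : ℕ) (hq : q.Prime) [Fact q.Prime] (hodd : q ≠ 2)
    (k : ℕ) (hk : Odd k) (hkpos : 0 < k) (hqk : q % k = 1 % k)
    (E : ℤ) (hE : ¬ ((q : ℤ) ∣ E)) :
    ∑ u ∈ Finset.Icc 1 (q - 1), legendreSym q ((u : ℤ) ^ k + E) =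
      legendreSym q E *
        ∑ u ∈ Finset.Icc 1 (q - 1),
          legendreSym q (u : ℤ) *
            legendreSym q ((u : ℤ) ^ k + (((E : ZMod q)⁻¹.val : ℕ) : ℤ)) :=
  stmt_9_general q k hk E hE
end
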